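/- The optimization problems min ‖w‖² subject to ‖h_i^H w‖²/σ_i² ≥ γ_i for all i (Problem 1) and min ‖t(w)·w‖² over nonzero w with t(w) = max_i sqrt(γ_i σ_i²/‖h_i^H w‖²) (Problem 2) have the same optimal value: the infimum of ‖w‖² over the feasible set of Problem 1 equals the infimum of ‖t(w)·w‖² over all w with ‖h_i^H w‖ > 0 for all i. -/

import Mathlib

open Matrix

/-!
A vector `w` with `⟪h i, w⟫ ≠ 0` for all `i` is turned into a feasible point of Problem 1 by the
smallest scaling `t(w)` that satisfies every constraint, so the values of Problem 2 are values of
Problem 1. Conversely, a feasible `w` already satisfies every constraint, so `t(w) ≤ 1` and the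
value `‖t(w) • w‖²` of Problem 2 at `w` is at most `‖w‖²`. Two sets of reals each of whose
elements dominates an element of the other have the same infimum.
-/

open Finset

section Scaling

variable (𝕜 : Type*) {E ι : Type*} [RCLike 𝕜] [NormedAddCommGroup E] [InnerProductSpace 𝕜 E]
  [Fintype ι]

/-- The factor `t(w)` of Problem 2, for constraints `b i ≤ ‖⟪h i, w⟫‖²`. -/
noncomputable def feasibilityScale (hι : (univ : Finset ι).Nonempty) (h : ι → E) (b : ι → ℝ)
    (w : E) : ℝ :=
  univ.sup' hι fun i => √(b i / ‖(inner 𝕜 (h i) w : 𝕜)‖ ^ 2)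

variable {𝕜}

theorem norm_inner_pos_of_le_sq {x y : E} {b : ℝ} (hb : 0 < b)
    (hfeas : b ≤ ‖(inner 𝕜 x y : 𝕜)‖ ^ 2) : 0 < ‖(inner 𝕜 x y : 𝕜)‖ := by
  by_contra! hle
  have : ‖(inner 𝕜 x y : 𝕜)‖ = 0 := le_antisymm hle (norm_nonneg _)
  rw [this] at hfeas
  linarith [zero_pow two_ne_zero (M₀ := ℝ)]

theorem feasibilityScale_nonneg (hι : (univ : Finset ι).Nonempty) (h : ι → E) (b : ι → ℝ)
    (w : E) : 0 ≤ feasibilityScale 𝕜 hι h b w :=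
  (Real.sqrt_nonneg _).trans
    (le_sup' (fun i => √(b i / ‖(inner 𝕜 (h i) w : 𝕜)‖ ^ 2)) hι.choose_spec)

theorem feasibilityScale_le_one (hι : (univ : Finset ι).Nonempty) {h : ι → E} {b : ι → ℝ}
    {w : E} (hw : ∀ i, 0 < ‖(inner 𝕜 (h i) w : 𝕜)‖)
    (hfeas : ∀ i, b i ≤ ‖(inner 𝕜 (h i) w : 𝕜)‖ ^ 2) : feasibilityScale 𝕜 hι h b w ≤ 1 :=
  sup'_le _ _ fun i _ => Real.sqrt_le_one.mpr ((div_le_one (pow_pos (hw i) 2)).mpr (hfeas i))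

variable [NormedSpace ℝ E]

theorem norm_feasibilityScale_smul_le (hι : (univ : Finset ι).Nonempty) {h : ι → E}
    {b : ι → ℝ} {w : E} (hw : ∀ i, 0 < ‖(inner 𝕜 (h i) w : 𝕜)‖)
    (hfeas : ∀ i, b i ≤ ‖(inner 𝕜 (h i) w : 𝕜)‖ ^ 2) :
    ‖feasibilityScale 𝕜 hι h b w • w‖ ≤ ‖w‖ := by
  rw [norm_smul, Real.norm_of_nonneg (feasibilityScale_nonneg hι h b w)]
  exact mul_le_of_le_one_left (norm_nonneg w) (feasibilityScale_le_one hι hw hfeas)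

variable [IsScalarTower ℝ 𝕜 E]

theorem norm_inner_real_smul_right (x y : E) (c : ℝ) :
    ‖(inner 𝕜 x (c • y) : 𝕜)‖ = |c| * ‖(inner 𝕜 x y : 𝕜)‖ := by
  rw [RCLike.real_smul_eq_coe_smul (K := 𝕜), inner_smul_real_right, norm_smul, Real.norm_eq_abs]

theorem le_norm_inner_feasibilityScale_smul (hι : (univ : Finset ι).Nonempty) {h : ι → E}
    {b : ι → ℝ} {w : E} (hw : ∀ i, 0 < ‖(inner 𝕜 (h i) w : 𝕜)‖) (i : ι) :
    b i ≤ ‖(inner 𝕜 (h i) (feasibilityScale 𝕜 hι h b w • w) : 𝕜)‖ ^ 2 := by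
  have hle : √(b i / ‖(inner 𝕜 (h i) w : 𝕜)‖ ^ 2) ≤ feasibilityScale 𝕜 hι h b w :=
    le_sup' (fun i => √(b i / ‖(inner 𝕜 (h i) w : 𝕜)‖ ^ 2)) (mem_univ i)
  have hsq := (Real.sqrt_le_iff.mp hle).2
  rw [div_le_iff₀ (pow_pos (hw i) 2)] at hsq
  rwa [norm_inner_real_smul_right, mul_pow, sq_abs]

end Scaling

theorem stmt4_general (N M : ℕ) (hM : 0 < M) (h : Fin M → EuclideanSpace ℂ (Fin N))
    (σ γ : Fin M → ℝ) (hσ : ∀ i, 0 < σ i) (hγ : ∀ i, 0 < γ i) :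
    sInf {r : ℝ | ∃ w : EuclideanSpace ℂ (Fin N),
        (∀ i, γ i * σ i ^ 2 ≤ ‖(inner ℂ (h i) w : ℂ)‖ ^ 2) ∧ r = ‖w‖ ^ 2} =
    sInf {r : ℝ | ∃ w : EuclideanSpace ℂ (Fin N),
        (∀ i, 0 < ‖(inner ℂ (h i) w : ℂ)‖) ∧
        r = ‖(Finset.univ.sup' ⟨⟨0, hM⟩, Finset.mem_univ _⟩ (fun i => Real.sqrt (γ i * σ i ^ 2 / ‖(inner ℂ (h i) w : ℂ)‖ ^ 2))) • w‖ ^ 2} := by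
  have hι : (univ : Finset (Fin M)).Nonempty := ⟨⟨0, hM⟩, mem_univ _⟩
  apply csInf_eq_csInf_of_forall_exists_le
  · rintro _ ⟨w, hfeas, rfl⟩
    have hw i := norm_inner_pos_of_le_sq (mul_pos (hγ i) (pow_pos (hσ i) 2)) (hfeas i)
    exact ⟨_, ⟨w, hw, rfl⟩, pow_le_pow_left₀ (norm_nonneg _)
      (norm_feasibilityScale_smul_le hι hw hfeas) 2⟩
  · rintro _ ⟨w, hw, rfl⟩
    exact ⟨_, ⟨_, le_norm_inner_feasibilityScale_smul hι hw, rfl⟩, le_rfl⟩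

theorem stmt4 (N M : ℕ) (hM : 0 < M) (h : Fin M → EuclideanSpace ℂ (Fin N))
    (σ γ : Fin M → ℝ) (hσ : ∀ i, 0 < σ i) (hγ : ∀ i, 0 < γ i)
    (hne : ∃ w : EuclideanSpace ℂ (Fin N),
      ∀ i, γ i * σ i ^ 2 ≤ ‖(inner ℂ (h i) w : ℂ)‖ ^ 2) :
    sInf {r : ℝ | ∃ w : EuclideanSpace ℂ (Fin N),
        (∀ i, γ i * σ i ^ 2 ≤ ‖(inner ℂ (h i) w : ℂ)‖ ^ 2) ∧ r = ‖w‖ ^ 2} =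
    sInf {r : ℝ | ∃ w : EuclideanSpace ℂ (Fin N),
        (∀ i, 0 < ‖(inner ℂ (h i) w : ℂ)‖) ∧
        r = ‖(Finset.univ.sup' ⟨⟨0, hM⟩, Finset.mem_univ _⟩ (fun i => Real.sqrt (γ i * σ i ^ 2 / ‖(inner ℂ (h i) w : ℂ)‖ ^ 2))) • w‖ ^ 2} :=
  stmt4_general N M hM h σ γ hσ hγ
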